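/- arXiv:math/0412419 — 4 statements merged into one kernel-verified Lean document; each statement's English description precedes it below -/
import Mathlib

section
/- Let w: ℝ → [0,∞) be nondecreasing on (−∞,0], nonincreasing on [0,∞), and satisfy ∫_{−∞}^0 w(t) dt = ∫_0^∞ w(t) dt = ∞. Let q > 0, let h: [0,q) → [0,∞] be measurable with ∫_0^q h(u) du > 0, let s ≠ 0 and v ∈ ℝ. Then ∫_ℝ w(t) · h({v + s t}_q) dt = ∞, where {x}_q := x − q⌊x/q⌋ denotes the fractional part of x with respect to q. -/
open MeasureTheory Set
open scoped ENNReal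


noncomputable def cfrac (q x : ℝ) : ℝ := x - q * (⌊x / q⌋ : ℤ)

lemma cfrac_measurable (q : ℝ) : Measurable (cfrac q) := by
  unfold cfrac
  exact measurable_id.sub
    ((measurable_const.mul ((Measurable.comp measurable_from_top
      (Int.measurable_floor.comp (measurable_id.div_const q))))))

lemma cfrac_add_int_mul {q : ℝ} (hq : 0 < q) (x : ℝ) (m : ℤ) :
    cfrac q (x + (m : ℝ) * q) = cfrac q x := by
  unfold cfrac
  have hdiv : (x + (m : ℝ) * q) / q = x / q + m := by field_simp
  rw [hdiv, Int.floor_add_intCast]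
  push_cast; ring

lemma cfrac_eq_self {q : ℝ} (hq : 0 < q) {x : ℝ} (hx : x ∈ Ico 0 q) :
    cfrac q x = x := by
  unfold cfrac
  have : ⌊x / q⌋ = 0 := by
    rw [Int.floor_eq_zero_iff]
    exact ⟨div_nonneg hx.1 hq.le, (div_lt_one hq).2 hx.2⟩
  simp [this]

lemma cfrac_def (q x : ℝ) : x - q * (⌊x / q⌋ : ℤ) = cfrac q x := rfl

lemma lint_shift (G : ℝ → ℝ≥0∞) (d a b : ℝ) :
    ∫⁻ x in Ico (a - d) (b - d), G (x + d) = ∫⁻ y in Ico a b, G y := by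
  have h := (measurePreserving_add_right (volume : Measure ℝ) d).setLIntegral_comp_preimage_emb
    (Homeomorph.addRight d).measurableEmbedding G (Ico a b)
  rwa [preimage_add_const_Ico] at h

lemma lint_cfrac_Ico {q : ℝ} (hq : 0 < q) (h : ℝ → ℝ≥0∞) (c : ℝ) :
    ∫⁻ y in Ico c (c + q), h (cfrac q y) = ∫⁻ u in Ico 0 q, h u := by
  set m : ℤ := ⌈c / q⌉ with hm
  have h1 : c ≤ (m : ℝ) * q := by
    have := Int.le_ceil (c / q)
    rw [div_le_iff₀ hq] at this
    simpa [hm] using this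
  have h2 : (m : ℝ) * q < c + q := by
    have hce : (m : ℝ) < c / q + 1 := Int.ceil_lt_add_one (c / q)
    have hd : c / q * q = c := div_mul_cancel₀ c hq.ne'
    nlinarith
  set r : ℝ := c + q - (m : ℝ) * q with hr
  have hr0 : 0 < r := by simp [hr]; linarith
  have hrq : r ≤ q := by simp [hr]; linarith
  have hsplit : Ico c (c + q) = Ico c ((m : ℝ) * q) ∪ Ico ((m : ℝ) * q) (c + q) :=
    (Ico_union_Ico_eq_Ico h1 h2.le).symm
  have e1 : c - ((m - 1 : ℤ) : ℝ) * q = r := by push_cast; ring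
  have e2 : (m : ℝ) * q - ((m - 1 : ℤ) : ℝ) * q = q := by push_cast; ring
  have piece1 : ∫⁻ y in Ico c ((m : ℝ) * q), h (cfrac q y) = ∫⁻ x in Ico r q, h x := by
    have t1 := lint_shift (fun y => h (cfrac q y)) (((m - 1 : ℤ) : ℝ) * q) c ((m : ℝ) * q)
    rw [e1, e2] at t1
    calc ∫⁻ y in Ico c ((m : ℝ) * q), h (cfrac q y)
        = ∫⁻ x in Ico r q, h (cfrac q (x + ((m - 1 : ℤ) : ℝ) * q)) := t1.symm
      _ = ∫⁻ x in Ico r q, h x := by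
          refine setLIntegral_congr_fun measurableSet_Ico (fun x hx => ?_)
          rw [cfrac_add_int_mul hq, cfrac_eq_self hq ⟨hr0.le.trans hx.1, hx.2⟩]
  have e3 : (m : ℝ) * q - (m : ℝ) * q = 0 := by ring
  have e4 : c + q - (m : ℝ) * q = r := rfl
  have piece2 : ∫⁻ y in Ico ((m : ℝ) * q) (c + q), h (cfrac q y) = ∫⁻ x in Ico 0 r, h x := by
    have t2 := lint_shift (fun y => h (cfrac q y)) ((m : ℝ) * q) ((m : ℝ) * q) (c + q)
    rw [e3, e4] at t2
    calc ∫⁻ y in Ico ((m : ℝ) * q) (c + q), h (cfrac q y)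
        = ∫⁻ x in Ico 0 r, h (cfrac q (x + (m : ℝ) * q)) := t2.symm
      _ = ∫⁻ x in Ico 0 r, h x := by
          refine setLIntegral_congr_fun measurableSet_Ico (fun x hx => ?_)
          rw [cfrac_add_int_mul hq, cfrac_eq_self hq ⟨hx.1, hx.2.trans_le hrq⟩]
  rw [hsplit, lintegral_union measurableSet_Ico Ico_disjoint_Ico_same,
    piece1, piece2, add_comm, ← lintegral_union measurableSet_Ico
      Ico_disjoint_Ico_same, Ico_union_Ico_eq_Ico hr0.le hrq]

set_option maxHeartbeats 1000000 in
lemma main_pos (w : ℝ → ℝ) (hanti : AntitoneOn w (Set.Ici 0))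
    (hint_pos : ∫⁻ t in Set.Ici (0 : ℝ), ENNReal.ofReal (w t) = ⊤)
    (q : ℝ) (hq : 0 < q)
    (h : ℝ → ℝ≥0∞) (hmeas : Measurable h)
    (hpos : 0 < ∫⁻ u in Set.Ico (0 : ℝ) q, h u)
    (s v : ℝ) (hsp : 0 < s) :
    ∫⁻ t : ℝ, ENNReal.ofReal (w t) *
      h (v + s * t - q * (⌊(v + s * t) / q⌋ : ℤ)) = ⊤ := by
  simp only [cfrac_def]
  set p : ℝ := q / s with hpdef
  have hp : 0 < p := div_pos hq hsp
  set g : ℝ → ℝ≥0∞ := fun y => h (cfrac q y) with hgdef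
  have hgm : Measurable g := hmeas.comp (cfrac_measurable q)
  -- affine map computation
  have hfm : Measurable fun t : ℝ => v + s * t :=
    (measurable_id.const_mul s).const_add v
  have hmap : Measure.map (fun t : ℝ => v + s * t) volume
      = ENNReal.ofReal |s⁻¹| • volume := by
    have hcomp : (fun t : ℝ => v + s * t) = (fun x : ℝ => v + x) ∘ (fun t : ℝ => s * t) := rfl
    rw [hcomp, ← Measure.map_map (measurable_const_add v) (measurable_const_mul s),
      Real.map_volume_mul_left hsp.ne', Measure.map_smul, map_add_left_eq_self]
  have haff : ∀ A : Set ℝ, MeasurableSet A →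
      ∫⁻ t in (fun t : ℝ => v + s * t) ⁻¹' A, g (v + s * t)
        = ENNReal.ofReal |s⁻¹| * ∫⁻ y in A, g y := by
    intro A hA
    have := setLIntegral_map (μ := volume) hA hgm hfm
    rw [hmap, Measure.restrict_smul, lintegral_smul_measure] at this
    exact this.symm
  have hpre : ∀ a b : ℝ, (fun t : ℝ => v + s * t) ⁻¹' Ico a b
      = Ico ((a - v) / s) ((b - v) / s) := by
    intro a b
    ext x
    simp only [mem_preimage, mem_Ico, div_le_iff₀ hsp, lt_div_iff₀ hsp]
    constructor <;> rintro ⟨h1, h2⟩ <;> constructor <;> linarith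
  set H : ℝ≥0∞ := ∫⁻ u in Ico (0 : ℝ) q, h u with hH
  set C : ℝ≥0∞ := ENNReal.ofReal |s⁻¹| * H with hC
  have hC0 : C ≠ 0 := by
    apply mul_ne_zero
    · simp only [ne_eq, ENNReal.ofReal_eq_zero, not_le]
      positivity
    · exact hpos.ne'
  have hIeq : ∀ n : ℕ, (fun t : ℝ => v + s * t) ⁻¹' Ico (v + n * q) (v + n * q + q)
      = Ico ((n : ℝ) * p) (((n : ℝ) + 1) * p) := by
    intro n
    rw [hpre]
    have e1 : (v + (n : ℝ) * q - v) / s = (n : ℝ) * p := by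
      rw [hpdef]; field_simp; ring
    have e2 : (v + (n : ℝ) * q + q - v) / s = ((n : ℝ) + 1) * p := by
      rw [hpdef]; field_simp; ring
    rw [e1, e2]
  have hInt : ∀ n : ℕ,
      ∫⁻ t in Ico ((n : ℝ) * p) (((n : ℝ) + 1) * p), g (v + s * t) = C := by
    intro n
    rw [← hIeq n, haff _ measurableSet_Ico, lint_cfrac_Ico hq h (v + n * q)]
  -- union structure
  have hUnion : Ici (0 : ℝ) = ⋃ n : ℕ, Ico ((n : ℝ) * p) (((n : ℝ) + 1) * p) := by
    ext x
    simp only [mem_Ici, mem_iUnion, mem_Ico]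
    constructor
    · intro hx
      have h0 : (0 : ℤ) ≤ ⌊x / p⌋ := Int.floor_nonneg.mpr (div_nonneg hx hp.le)
      refine ⟨⌊x / p⌋.toNat, ?_, ?_⟩
      · have hcast : ((⌊x / p⌋.toNat : ℕ) : ℝ) = (⌊x / p⌋ : ℝ) := by
          exact_mod_cast Int.toNat_of_nonneg h0
        rw [hcast]
        calc ((⌊x / p⌋ : ℝ)) * p ≤ x / p * p :=
              mul_le_mul_of_nonneg_right (Int.floor_le _) hp.le
          _ = x := div_mul_cancel₀ x hp.ne'
      · have hcast : ((⌊x / p⌋.toNat : ℕ) : ℝ) = (⌊x / p⌋ : ℝ) := by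
          exact_mod_cast Int.toNat_of_nonneg h0
        rw [hcast]
        have hlt := Int.lt_floor_add_one (x / p)
        have := div_mul_cancel₀ x hp.ne'
        nlinarith
    · rintro ⟨n, h1, h2⟩
      have : (0 : ℝ) ≤ (n : ℝ) * p := mul_nonneg n.cast_nonneg hp.le
      linarith
  have hdisj : Pairwise (Function.onFun Disjoint
      fun n : ℕ => Ico ((n : ℝ) * p) (((n : ℝ) + 1) * p)) := by
    intro i j hij
    rcases hij.lt_or_gt with hl | hl
    · refine Ico_disjoint_Ico.mpr ?_
      have : ((i : ℝ) + 1) * p ≤ (j : ℝ) * p := by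
        have : (i : ℝ) + 1 ≤ (j : ℝ) := by exact_mod_cast hl
        nlinarith
      exact le_trans (min_le_left _ _) (this.trans (le_max_right _ _))
    · refine Ico_disjoint_Ico.mpr ?_
      have : ((j : ℝ) + 1) * p ≤ (i : ℝ) * p := by
        have : (j : ℝ) + 1 ≤ (i : ℝ) := by exact_mod_cast hl
        nlinarith
      exact le_trans (min_le_right _ _) (this.trans (le_max_left _ _))
  -- divergence of the sum of w at grid points
  set a : ℕ → ℝ≥0∞ := fun n => ENNReal.ofReal (w ((n : ℝ) * p)) with ha
  have hgrid : ∀ n : ℕ, (0 : ℝ) ≤ (n : ℝ) * p := fun n => mul_nonneg n.cast_nonneg hp.le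
  have hsum : ∑' n : ℕ, a n = ⊤ := by
    by_contra hc
    have hbound : ∀ n : ℕ, ∫⁻ t in Ico ((n : ℝ) * p) (((n : ℝ) + 1) * p),
        ENNReal.ofReal (w t) ≤ a n * ENNReal.ofReal p := by
      intro n
      calc ∫⁻ t in Ico ((n : ℝ) * p) (((n : ℝ) + 1) * p), ENNReal.ofReal (w t)
          ≤ ∫⁻ _ in Ico ((n : ℝ) * p) (((n : ℝ) + 1) * p), a n := by
            refine setLIntegral_mono' measurableSet_Ico fun x hx => ?_
            exact ENNReal.ofReal_le_ofReal
              (hanti (hgrid n) ((hgrid n).trans hx.1) hx.1)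
        _ = a n * ENNReal.ofReal p := by
            rw [setLIntegral_const, Real.volume_Ico]
            congr 1
            congr 1
            ring
    have htop := hint_pos
    rw [hUnion, lintegral_iUnion (fun n => measurableSet_Ico) hdisj] at htop
    have hle : (⊤ : ℝ≥0∞) ≤ (∑' n : ℕ, a n) * ENNReal.ofReal p := by
      rw [← ENNReal.tsum_mul_right, ← htop]
      exact Summable.tsum_le_tsum hbound ENNReal.summable ENNReal.summable
    exact ENNReal.mul_ne_top hc ENNReal.ofReal_ne_top (top_le_iff.mp hle)
  have hshift : ∑' n : ℕ, a (n + 1) = ⊤ :=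
    ENNReal.tsum_add_one_eq_top hsum ENNReal.ofReal_ne_top
  -- final chain
  have hlower : ∀ n : ℕ, a (n + 1) * C ≤
      ∫⁻ t in Ico ((n : ℝ) * p) (((n : ℝ) + 1) * p),
        ENNReal.ofReal (w t) * g (v + s * t) := by
    intro n
    have hcast : ((n + 1 : ℕ) : ℝ) = (n : ℝ) + 1 := by push_cast; ring
    calc a (n + 1) * C
        = ∫⁻ t in Ico ((n : ℝ) * p) (((n : ℝ) + 1) * p), a (n + 1) * g (v + s * t) := by
          have hgc : Measurable fun t : ℝ => g (v + s * t) := hgm.comp hfm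
          rw [lintegral_const_mul _ hgc, hInt n]
      _ ≤ ∫⁻ t in Ico ((n : ℝ) * p) (((n : ℝ) + 1) * p),
            ENNReal.ofReal (w t) * g (v + s * t) := by
          refine setLIntegral_mono' measurableSet_Ico fun x hx => ?_
          have hx0 : (0 : ℝ) ≤ x := (hgrid n).trans hx.1
          have hxle : x ≤ ((n : ℝ) + 1) * p := hx.2.le
          have hnp : (0 : ℝ) ≤ ((n : ℝ) + 1) * p := by positivity
          have hw : w (((n : ℝ) + 1) * p) ≤ w x :=
            hanti (mem_Ici.mpr hx0) (mem_Ici.mpr hnp) hxle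
          have hun : a (n + 1) = ENNReal.ofReal (w (((n : ℝ) + 1) * p)) := by
            rw [ha]; push_cast; ring_nf
          rw [hun]
          exact mul_le_mul_left (ENNReal.ofReal_le_ofReal hw) _
  refine top_le_iff.mp ?_
  calc (⊤ : ℝ≥0∞) = (∑' n : ℕ, a (n + 1)) * C := by rw [hshift, ENNReal.top_mul hC0]
    _ = ∑' n : ℕ, a (n + 1) * C := ENNReal.tsum_mul_right.symm
    _ ≤ ∑' n : ℕ, ∫⁻ t in Ico ((n : ℝ) * p) (((n : ℝ) + 1) * p),
          ENNReal.ofReal (w t) * g (v + s * t) :=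
        Summable.tsum_le_tsum hlower ENNReal.summable ENNReal.summable
    _ = ∫⁻ t in Ici (0 : ℝ), ENNReal.ofReal (w t) * g (v + s * t) := by
        rw [hUnion, lintegral_iUnion (fun n => measurableSet_Ico) hdisj]
    _ ≤ ∫⁻ t : ℝ, ENNReal.ofReal (w t) * g (v + s * t) :=
        setLIntegral_le_lintegral _ _

/-- The computation (e:cyclic.3) in Example 4.2: the weighted time-integral of a
nontrivial periodic kernel diverges for every weight in the class 𝒲(ℝ).
Here `v + s*t - q*⌊(v + s*t)/q⌋` is the fractional part `{v + st}_q`. -/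
theorem weighted_integral_of_periodic_infinite
    (w : ℝ → ℝ) (hw0 : ∀ t, 0 ≤ w t)
    (hmono : MonotoneOn w (Set.Iic 0)) (hanti : AntitoneOn w (Set.Ici 0))
    (hint_neg : ∫⁻ t in Set.Iic (0 : ℝ), ENNReal.ofReal (w t) = ⊤)
    (hint_pos : ∫⁻ t in Set.Ici (0 : ℝ), ENNReal.ofReal (w t) = ⊤)
    (q : ℝ) (hq : 0 < q)
    (h : ℝ → ℝ≥0∞) (hmeas : Measurable h)
    (hpos : 0 < ∫⁻ u in Set.Ico (0 : ℝ) q, h u)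
    (s v : ℝ) (hs : s ≠ 0) :
    ∫⁻ t : ℝ, ENNReal.ofReal (w t) *
      h (v + s * t - q * (⌊(v + s * t) / q⌋ : ℤ)) = ⊤ := by
  rcases hs.lt_or_gt with hneg | hposs
  · -- s < 0 : reflect
    have hanti' : AntitoneOn (fun t => w (-t)) (Set.Ici 0) := by
      intro x hx y hy hxy
      exact hmono (mem_Iic.mpr (neg_nonpos.mpr (mem_Ici.mp hy)))
        (mem_Iic.mpr (neg_nonpos.mpr (mem_Ici.mp hx))) (neg_le_neg hxy)
    have hprene : (Neg.neg : ℝ → ℝ) ⁻¹' Set.Iic 0 = Set.Ici 0 := by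
      ext x; simp
    have hint' : ∫⁻ t in Set.Ici (0 : ℝ), ENNReal.ofReal (w (-t)) = ⊤ := by
      have := (Measure.measurePreserving_neg (volume : Measure ℝ)).setLIntegral_comp_preimage_emb
        (Homeomorph.neg ℝ).measurableEmbedding (fun t => ENNReal.ofReal (w t)) (Set.Iic 0)
      rw [hprene] at this
      rw [this]
      exact hint_neg
    have key := main_pos (fun t => w (-t)) hanti' hint' q hq h hmeas hpos (-s) v
      (neg_pos.mpr hneg)
    have hflip := (Measure.measurePreserving_neg (volume : Measure ℝ)).lintegral_comp_emb
      (Homeomorph.neg ℝ).measurableEmbedding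
      (fun t => ENNReal.ofReal (w t) * h (v + s * t - q * (⌊(v + s * t) / q⌋ : ℤ)))
    rw [← hflip]
    have hcong : ∀ x : ℝ, v + s * (-x) = v + (-s) * x := by intro x; ring
    calc ∫⁻ x : ℝ, ENNReal.ofReal (w (-x)) *
          h (v + s * (-x) - q * (⌊(v + s * (-x)) / q⌋ : ℤ))
        = ∫⁻ x : ℝ, ENNReal.ofReal (w (-x)) *
          h (v + (-s) * x - q * (⌊(v + (-s) * x) / q⌋ : ℤ)) := by
          refine lintegral_congr fun x => ?_
          rw [hcong]
      _ = ⊤ := key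
  · exact main_pos w hanti hint_pos q hq h hmeas hpos s v hposs
end

section
/- Let (Ω, 𝓕, P) be a probability space and let (Y_t)_{t∈ℝ} be real-valued random variables such that |Y_t| → ∞ in probability as |t| → ∞. For each t, let G be a standard Gaussian random variable independent of Y_t. Let g: ℝ → [0,∞) be Lebesgue integrable. Then h(t) := E[g(Y_t + G)] → 0 as |t| → ∞. -/
open MeasureTheory Filter
open scoped ENNReal NNReal

instance : (Filter.cocompact ℝ).IsCountablyGenerated := by
  rw [cocompact_eq_atBot_atTop]; infer_instance

lemma aux_gaussianPDFReal_le_one (x : ℝ) :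
    ProbabilityTheory.gaussianPDFReal 0 1 x ≤ 1 := by
  rw [ProbabilityTheory.gaussianPDFReal]
  have hπ : (1:ℝ) ≤ 2 * Real.pi * ((1:ℝ≥0):ℝ) := by
    have := Real.pi_gt_three
    simp only [NNReal.coe_one, mul_one]
    nlinarith
  have h1 : (1:ℝ) ≤ Real.sqrt (2 * Real.pi * ((1:ℝ≥0):ℝ)) := by
    rw [show (1:ℝ) = Real.sqrt 1 by simp]
    exact Real.sqrt_le_sqrt hπ
  have h2 : Real.exp (-(x - 0) ^ 2 / (2 * ((1:ℝ≥0):ℝ))) ≤ 1 := by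
    rw [Real.exp_le_one_iff]
    apply div_nonpos_of_nonpos_of_nonneg
    · nlinarith [sq_nonneg (x - 0)]
    · norm_num
  calc (Real.sqrt (2 * Real.pi * ((1:ℝ≥0):ℝ)))⁻¹ * Real.exp (-(x - 0) ^ 2 / (2 * ((1:ℝ≥0):ℝ)))
      ≤ 1 * 1 := by
        apply mul_le_mul _ h2 (Real.exp_nonneg _) zero_le_one
        rw [inv_le_one_iff₀]; right; exact h1
    _ = 1 := by norm_num

lemma aux_gaussianPDF_le_one (x : ℝ) :
    ProbabilityTheory.gaussianPDF 0 1 x ≤ 1 := by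
  rw [ProbabilityTheory.gaussianPDF]
  calc ENNReal.ofReal (ProbabilityTheory.gaussianPDFReal 0 1 x)
      ≤ ENNReal.ofReal 1 := ENNReal.ofReal_le_ofReal (aux_gaussianPDFReal_le_one x)
    _ = 1 := ENNReal.ofReal_one

lemma aux_gaussianPDFReal_tendsto_zero :
    Tendsto (ProbabilityTheory.gaussianPDFReal 0 1) (cocompact ℝ) (nhds 0) := by
  rw [ProbabilityTheory.gaussianPDFReal_def]
  have h1 : Tendsto (fun x : ℝ => Real.exp (-(x - 0) ^ 2 / (2 * ((1:ℝ≥0):ℝ)))) (cocompact ℝ)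
      (nhds 0) := by
    apply Real.tendsto_exp_atBot.comp
    have hsq : Tendsto (fun x : ℝ => (x - 0) ^ 2) (cocompact ℝ) atTop := by
      have hnorm : Tendsto (fun x : ℝ => |x|) (cocompact ℝ) atTop := by
        exact Tendsto.congr Real.norm_eq_abs (tendsto_norm_cocompact_atTop (E := ℝ))
      have h3 : Tendsto (fun x : ℝ => |x| ^ 2) (cocompact ℝ) atTop :=
        (tendsto_pow_atTop (two_ne_zero)).comp hnorm
      simpa [sq_abs] using h3
    have h4 : Tendsto (fun x : ℝ => -((x - 0) ^ 2) / (2 * ((1:ℝ≥0):ℝ))) (cocompact ℝ) atBot := by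
      apply Tendsto.atBot_div_const (by norm_num)
      exact tendsto_neg_atTop_atBot.comp hsq
    simpa [neg_div] using h4
  have h5 := h1.const_mul ((Real.sqrt (2 * Real.pi * ((1:ℝ≥0):ℝ)))⁻¹)
  simpa using h5

/-- The claim (e:h.to.0) in Example 4.3: if `|Y_t| → ∞` in probability and `G` is a
standard Gaussian independent of each `Y_t`, then `E[g(Y_t + G)] → 0` for every
integrable nonnegative `g`. -/
theorem expectation_tendsto_zero_of_escape_in_probability
    {Ω : Type*} [MeasurableSpace Ω] (P : Measure Ω) [IsProbabilityMeasure P]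
    (Y : ℝ → Ω → ℝ) (hY : ∀ t, Measurable (Y t))
    (hYinf : ∀ K : ℝ, Tendsto (fun t => P {ω | |Y t ω| ≤ K}) (cocompact ℝ) (nhds 0))
    (G : Ω → ℝ) (hG : Measurable G)
    (hGlaw : P.map G = ProbabilityTheory.gaussianReal 0 1)
    (hindep : ∀ t, ProbabilityTheory.IndepFun (Y t) G P)
    (g : ℝ → ℝ) (hgmeas : Measurable g) (hgnn : ∀ x, 0 ≤ g x) (hgint : Integrable g) :
    Tendsto (fun t => ∫⁻ ω, ENNReal.ofReal (g (Y t ω + G ω)) ∂P)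
      (cocompact ℝ) (nhds 0) := by
  classical
  set ν := ProbabilityTheory.gaussianReal 0 1 with hν
  set F : ℝ → ℝ≥0∞ := fun y => ∫⁻ x, ENNReal.ofReal (g (y + x)) ∂ν with hF
  set I : ℝ≥0∞ := ∫⁻ u, ENNReal.ofReal (g u) with hI
  have hIlt : I < ⊤ := hgint.lintegral_lt_top
  -- Step A: rewrite the integral using independence
  have hfmeas : Measurable (fun p : ℝ × ℝ => ENNReal.ofReal (g (p.1 + p.2))) :=
    (hgmeas.comp (measurable_fst.add measurable_snd)).ennreal_ofReal
  have stepA : ∀ t, ∫⁻ ω, ENNReal.ofReal (g (Y t ω + G ω)) ∂P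
      = ∫⁻ y, F y ∂(P.map (Y t)) := by
    intro t
    have hmap : P.map (fun ω => (Y t ω, G ω)) = (P.map (Y t)).prod (P.map G) :=
      (ProbabilityTheory.indepFun_iff_map_prod_eq_prod_map_map (hY t).aemeasurable
        hG.aemeasurable).mp (hindep t)
    calc ∫⁻ ω, ENNReal.ofReal (g (Y t ω + G ω)) ∂P
        = ∫⁻ p, ENNReal.ofReal (g (p.1 + p.2)) ∂(P.map (fun ω => (Y t ω, G ω))) := by
          rw [lintegral_map hfmeas ((hY t).prodMk hG)]
      _ = ∫⁻ p, ENNReal.ofReal (g (p.1 + p.2)) ∂((P.map (Y t)).prod ν) := by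
          rw [hmap, hGlaw]
      _ = ∫⁻ y, F y ∂(P.map (Y t)) := lintegral_prod _ hfmeas.aemeasurable
  -- rewrite gaussian as density
  have hνdens : ν = volume.withDensity (ProbabilityTheory.gaussianPDF 0 1) :=
    ProbabilityTheory.gaussianReal_of_var_ne_zero 0 one_ne_zero
  have hpdfmeas : Measurable (ProbabilityTheory.gaussianPDF 0 1) :=
    (ProbabilityTheory.measurable_gaussianPDFReal 0 1).ennreal_ofReal
  have hFeq : ∀ y, F y
      = ∫⁻ u, ProbabilityTheory.gaussianPDF 0 1 (u - y) * ENNReal.ofReal (g u) := by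
    intro y
    have hm : Measurable fun x : ℝ => ENNReal.ofReal (g (y + x)) := by
      exact (hgmeas.comp (measurable_const.add measurable_id)).ennreal_ofReal
    have e1 : F y = ∫⁻ x, ProbabilityTheory.gaussianPDF 0 1 x * ENNReal.ofReal (g (y + x)) := by
      rw [hF]
      simp only
      rw [hνdens]
      exact lintegral_withDensity_eq_lintegral_mul volume hpdfmeas hm
    have e2 := lintegral_add_right_eq_self
      (μ := (volume : Measure ℝ))
      (fun u => ProbabilityTheory.gaussianPDF 0 1 (u - y) * ENNReal.ofReal (g u)) y
    rw [e1, ← e2]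
    congr 1
    ext x
    rw [add_sub_cancel_right, add_comm]
  -- Step B: F is bounded by I
  have stepB : ∀ y, F y ≤ I := by
    intro y
    rw [hFeq y, hI]
    calc ∫⁻ u, ProbabilityTheory.gaussianPDF 0 1 (u - y) * ENNReal.ofReal (g u)
        ≤ ∫⁻ u, 1 * ENNReal.ofReal (g u) :=
          lintegral_mono fun u => mul_le_mul_left (aux_gaussianPDF_le_one _) _
      _ = ∫⁻ u, ENNReal.ofReal (g u) := by simp
  -- Step C: F tends to 0 at cocompact
  have stepC : Tendsto F (cocompact ℝ) (nhds 0) := by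
    have hmeas : ∀ y : ℝ, Measurable
        (fun u => ProbabilityTheory.gaussianPDF 0 1 (u - y) * ENNReal.ofReal (g u)) := fun y => by
      exact (hpdfmeas.comp (measurable_id.sub measurable_const)).mul
        hgmeas.ennreal_ofReal
    have h := tendsto_lintegral_filter_of_dominated_convergence
      (μ := (volume : Measure ℝ)) (l := cocompact ℝ)
      (F := fun y u => ProbabilityTheory.gaussianPDF 0 1 (u - y) * ENNReal.ofReal (g u))
      (f := fun _ => 0)
      (bound := fun u => ENNReal.ofReal (g u))
      (Eventually.of_forall hmeas)
      (Eventually.of_forall fun y => Eventually.of_forall fun u => by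
        calc ProbabilityTheory.gaussianPDF 0 1 (u - y) * ENNReal.ofReal (g u)
            ≤ 1 * ENNReal.ofReal (g u) :=
              mul_le_mul_left (aux_gaussianPDF_le_one _) _
          _ = ENNReal.ofReal (g u) := one_mul _)
      hIlt.ne
      (Eventually.of_forall fun u => by
        have hsub : Tendsto (fun y : ℝ => u - y) (cocompact ℝ) (cocompact ℝ) :=
          le_of_eq ((Homeomorph.subLeft u).map_cocompact)
        have hpdf : Tendsto (fun y : ℝ => ProbabilityTheory.gaussianPDF 0 1 (u - y))
            (cocompact ℝ) (nhds 0) := by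
          have hc := aux_gaussianPDFReal_tendsto_zero.comp hsub
          have h2 : Tendsto (fun y : ℝ =>
              ENNReal.ofReal (ProbabilityTheory.gaussianPDFReal 0 1 (u - y)))
              (cocompact ℝ) (nhds (ENNReal.ofReal 0)) :=
            (ENNReal.continuous_ofReal.tendsto 0).comp hc
          simpa [ProbabilityTheory.gaussianPDF] using h2
        have h3 := ENNReal.Tendsto.mul_const hpdf
          (Or.inr (ENNReal.ofReal_ne_top : ENNReal.ofReal (g u) ≠ ⊤))
        simpa using h3)
    rw [lintegral_zero] at h
    refine h.congr fun y => (hFeq y).symm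
  -- Step D: assemble
  simp only [funext stepA]
  rw [ENNReal.tendsto_nhds_zero]
  intro ε hε
  have hε2 : (0:ℝ≥0∞) < ε / 2 := ENNReal.div_pos hε.ne' (by norm_num)
  -- find R with F y ≤ ε/2 for |y| > R
  have hC := (ENNReal.tendsto_nhds_zero.mp stepC) (ε / 2) hε2
  obtain ⟨K, hKc, hKsub⟩ := mem_cocompact.mp hC
  obtain ⟨R, hR⟩ := hKc.isBounded.subset_closedBall 0
  have hFsmall : ∀ y : ℝ, R < |y| → F y ≤ ε / 2 := by
    intro y hy
    apply hKsub
    intro hyK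
    have hb := hR hyK
    rw [Metric.mem_closedBall, Real.dist_eq, sub_zero] at hb
    exact absurd hb (not_le.mpr hy)
  by_cases hI0 : I = 0
  · -- then everything is ≤ ε trivially since F ≤ I = 0
    filter_upwards with t
    have hle : ∫⁻ y, F y ∂(P.map (Y t)) ≤ ∫⁻ _, (0:ℝ≥0∞) ∂(P.map (Y t)) :=
      lintegral_mono fun y => (stepB y).trans_eq hI0
    rw [lintegral_zero] at hle
    exact hle.trans zero_le
  · set δ : ℝ≥0∞ := (ε / 2) / I with hδ
    have hδpos : 0 < δ := ENNReal.div_pos hε2.ne' hIlt.ne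
    have hP := (ENNReal.tendsto_nhds_zero.mp (hYinf R)) δ hδpos
    filter_upwards [hP] with t hPt
    have hmapP : IsProbabilityMeasure (P.map (Y t)) :=
      Measure.isProbabilityMeasure_map (hY t).aemeasurable
    set s : Set ℝ := {y | |y| ≤ R} with hs
    have hsmeas : MeasurableSet s := by
      have hss : s = Set.Icc (-R) R := by ext y; simp [hs, abs_le]
      rw [hss]; exact measurableSet_Icc
    have hsplit : ∫⁻ y, F y ∂(P.map (Y t))
        = ∫⁻ y in s, F y ∂(P.map (Y t)) + ∫⁻ y in sᶜ, F y ∂(P.map (Y t)) :=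
      (lintegral_add_compl _ hsmeas).symm
    have hpart1 : ∫⁻ y in s, F y ∂(P.map (Y t)) ≤ ε / 2 := by
      calc ∫⁻ y in s, F y ∂(P.map (Y t))
          ≤ ∫⁻ _ in s, I ∂(P.map (Y t)) := lintegral_mono fun y => stepB y
        _ = I * (P.map (Y t)) s := setLIntegral_const s I
        _ = I * P {ω | |Y t ω| ≤ R} := by
            rw [Measure.map_apply (hY t) hsmeas]; rfl
        _ ≤ I * δ := mul_le_mul_right hPt _
        _ ≤ ε / 2 := by rw [hδ]; exact ENNReal.mul_div_le
    have hpart2 : ∫⁻ y in sᶜ, F y ∂(P.map (Y t)) ≤ ε / 2 := by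
      calc ∫⁻ y in sᶜ, F y ∂(P.map (Y t))
          ≤ ∫⁻ _ in sᶜ, ε / 2 ∂(P.map (Y t)) := by
            apply setLIntegral_mono measurable_const
            intro y hy
            exact hFsmall y (not_le.mp hy)
        _ = ε / 2 * (P.map (Y t)) sᶜ := setLIntegral_const _ _
        _ ≤ ε / 2 * 1 := mul_le_mul_right prob_le_one _
        _ = ε / 2 := mul_one _
    calc ∫⁻ y, F y ∂(P.map (Y t)) = _ + _ := hsplit
      _ ≤ ε / 2 + ε / 2 := add_le_add hpart1 hpart2
      _ = ε := ENNReal.add_halves ε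
end

section
/- Let (Ω, 𝓕, P) be a probability space, let Y: ℝ × Ω → ℝ be jointly measurable with |Y(t)| → ∞ in probability as |t| → ∞, let 0 < α < 2 and φ ∈ L^α(Leb_ℝ). Then there exists a function w: ℝ → [0,∞), nondecreasing on (−∞,0], nonincreasing on [0,∞), with ∫_{−∞}^0 w = ∫_0^∞ w = ∞, such that ∫_Ω ∫_ℝ ( ∫_ℝ w(t) |φ(Y(t,ω) + z)|^α dt ) (2π)^{−1/2} e^{−z²/2} dz P(dω) < ∞. -/
open MeasureTheory Filter Set
open scoped ENNReal
open MeasureTheory Filter Set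
open scoped ENNReal

noncomputable def gaussW (z : ℝ) : ℝ≥0∞ :=
  ENNReal.ofReal (Real.exp (-z ^ 2 / 2) / Real.sqrt (2 * Real.pi))

lemma gaussW_meas : Measurable gaussW := by
  apply ENNReal.measurable_ofReal.comp
  exact Continuous.measurable (by continuity)

lemma sqrt2pi_pos : 0 < Real.sqrt (2 * Real.pi) :=
  Real.sqrt_pos.2 (by positivity)

lemma gaussW_le_const (z : ℝ) : gaussW z ≤ ENNReal.ofReal (1 / Real.sqrt (2 * Real.pi)) := by
  apply ENNReal.ofReal_le_ofReal
  exact (div_le_div_iff_of_pos_right sqrt2pi_pos).2 (Real.exp_le_one_iff.2 (by nlinarith [sq_nonneg z]))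

lemma gaussW_anti {M z : ℝ} (hM : 0 ≤ M) (h : M ≤ |z|) :
    gaussW z ≤ ENNReal.ofReal (Real.exp (-M ^ 2 / 2) / Real.sqrt (2 * Real.pi)) := by
  apply ENNReal.ofReal_le_ofReal
  have h2 : M ^ 2 ≤ z ^ 2 := by
    have := pow_le_pow_left₀ hM h 2
    simpa [sq_abs] using this
  exact (div_le_div_iff_of_pos_right sqrt2pi_pos).2 (Real.exp_le_exp.2 (by linarith))

lemma gaussW_decay : Tendsto (fun M : ℝ =>
    ENNReal.ofReal (Real.exp (-M ^ 2 / 2) / Real.sqrt (2 * Real.pi))) atTop (nhds 0) := by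
  have h1 : Tendsto (fun M : ℝ => -M ^ 2 / 2) atTop atBot := by
    apply Tendsto.atBot_div_const (by norm_num : (0:ℝ) < 2)
    exact tendsto_neg_atTop_atBot.comp (tendsto_pow_atTop (two_ne_zero))
  have h2 : Tendsto (fun M : ℝ => Real.exp (-M ^ 2 / 2) / Real.sqrt (2 * Real.pi))
      atTop (nhds 0) := by
    simpa using (Real.tendsto_exp_atBot.comp h1).div_const (Real.sqrt (2 * Real.pi))
  have := (ENNReal.tendsto_ofReal h2)
  simpa using this

lemma tail_small {ψ : ℝ → ℝ≥0∞} (hψ : Measurable ψ) (hA : ∫⁻ x, ψ x ≠ ⊤)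
    {ε : ℝ≥0∞} (hε : ε ≠ 0) :
    ∃ R : ℝ, 0 ≤ R ∧ ∫⁻ u in {u : ℝ | R < |u|}, ψ u ≤ ε := by
  set ν := volume.withDensity ψ with hν
  haveI : IsFiniteMeasure ν := isFiniteMeasure_withDensity hA
  set s : ℕ → Set ℝ := fun n => {u : ℝ | (n : ℝ) < |u|} with hs
  have hmeas : ∀ n, MeasurableSet (s n) := fun n =>
    measurableSet_lt measurable_const measurable_abs
  have hanti : Antitone s := by
    intro m n hmn u hu
    simp only [hs, Set.mem_setOf_eq] at hu ⊢
    exact lt_of_le_of_lt (by exact_mod_cast hmn) hu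
  have hiInter : ⋂ n, s n = ∅ := by
    ext u
    simp only [Set.mem_iInter, hs, Set.mem_setOf_eq, Set.mem_empty_iff_false, iff_false, not_forall,
      not_lt]
    obtain ⟨n, hn⟩ := exists_nat_ge |u|
    exact ⟨n, hn⟩
  have htend : Tendsto (ν ∘ s) atTop (nhds 0) := by
    have := tendsto_measure_iInter_atTop (μ := ν) (fun n => (hmeas n).nullMeasurableSet)
      hanti ⟨0, measure_ne_top ν _⟩
    rwa [hiInter, measure_empty] at this
  rw [ENNReal.tendsto_nhds_zero] at htend
  obtain ⟨n, hn⟩ := (htend ε (pos_iff_ne_zero.2 hε)).exists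
  refine ⟨n, n.cast_nonneg, ?_⟩
  rw [← withDensity_apply ψ (hmeas n)]
  exact hn

lemma h0_small {ψ : ℝ → ℝ≥0∞} (hψ : Measurable ψ) (hA : ∫⁻ x, ψ x ≠ ⊤)
    {ε : ℝ≥0∞} (hε : ε ≠ 0) :
    ∃ K : ℝ, ∀ y : ℝ, K ≤ |y| → ∫⁻ z, ψ (y + z) * gaussW z ≤ ε := by
  set c : ℝ≥0∞ := ENNReal.ofReal (1 / Real.sqrt (2 * Real.pi)) with hcdef
  have hc0 : c ≠ 0 := by
    rw [hcdef]
    exact (ENNReal.ofReal_pos.2 (by positivity)).ne'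
  have hctop : c ≠ ⊤ := ENNReal.ofReal_ne_top
  have hδ0 : ε / 2 / c ≠ 0 :=
    (ENNReal.div_pos (ENNReal.div_pos hε (by norm_num)).ne' hctop).ne'
  obtain ⟨R, hR0, hRtail⟩ := tail_small hψ hA hδ0
  -- choose M
  have hdecay : Tendsto (fun M : ℝ =>
      ENNReal.ofReal (Real.exp (-M ^ 2 / 2) / Real.sqrt (2 * Real.pi)) * ∫⁻ x, ψ x)
      atTop (nhds 0) := by
    simpa using ENNReal.Tendsto.mul_const gaussW_decay (b := ∫⁻ x, ψ x) (Or.inr hA)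
  rw [ENNReal.tendsto_nhds_zero] at hdecay
  obtain ⟨M₀, hM₀⟩ := (eventually_atTop.1 (hdecay (ε / 2)
    (pos_iff_ne_zero.2 (ENNReal.div_pos hε (by norm_num)).ne')))
  set M : ℝ := max M₀ 0 with hMdef
  have hM0 : 0 ≤ M := le_max_right _ _
  have hMγ : ENNReal.ofReal (Real.exp (-M ^ 2 / 2) / Real.sqrt (2 * Real.pi)) * (∫⁻ x, ψ x)
      ≤ ε / 2 := hM₀ M (le_max_left _ _)
  refine ⟨R + M, fun y hy => ?_⟩
  -- substitution
  have hsub : ∫⁻ z, ψ (y + z) * gaussW z = ∫⁻ u, ψ u * gaussW (u - y) := by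
    have := lintegral_add_left_eq_self (μ := volume) (fun u => ψ u * gaussW (u - y)) y
    simp only [add_sub_cancel_left] at this
    exact this
  rw [hsub]
  set S : Set ℝ := {u : ℝ | R < |u|} with hSdef
  have hSmeas : MeasurableSet S := measurableSet_lt measurable_const measurable_abs
  rw [← lintegral_add_compl (fun u => ψ u * gaussW (u - y)) hSmeas]
  have hb1 : ∫⁻ u in S, ψ u * gaussW (u - y) ≤ ε / 2 := by
    calc ∫⁻ u in S, ψ u * gaussW (u - y)
        ≤ ∫⁻ u in S, ψ u * c := by
          apply lintegral_mono
          intro u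
          exact mul_le_mul' le_rfl (gaussW_le_const _)
      _ = (∫⁻ u in S, ψ u) * c := lintegral_mul_const _ hψ
      _ ≤ ε / 2 / c * c := by gcongr
      _ = ε / 2 := ENNReal.div_mul_cancel hc0 hctop
  have hb2 : ∫⁻ u in Sᶜ, ψ u * gaussW (u - y) ≤ ε / 2 := by
    set γ : ℝ≥0∞ := ENNReal.ofReal (Real.exp (-M ^ 2 / 2) / Real.sqrt (2 * Real.pi)) with hγdef
    have hγle : ∀ u ∈ Sᶜ, ψ u * gaussW (u - y) ≤ ψ u * γ := by
      intro u hu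
      simp only [hSdef, Set.mem_compl_iff, Set.mem_setOf_eq, not_lt] at hu
      apply mul_le_mul' le_rfl
      apply gaussW_anti hM0
      have : |y| - |u| ≤ |u - y| := by
        rw [abs_sub_comm]
        exact abs_sub_abs_le_abs_sub y u
      linarith
    calc ∫⁻ u in Sᶜ, ψ u * gaussW (u - y)
        ≤ ∫⁻ u in Sᶜ, ψ u * γ := setLIntegral_mono (hψ.mul measurable_const) hγle
      _ = (∫⁻ u in Sᶜ, ψ u) * γ := lintegral_mul_const _ hψ
      _ ≤ (∫⁻ u, ψ u) * γ := by gcongr; exact Measure.restrict_le_self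
      _ = γ * ∫⁻ u, ψ u := mul_comm _ _
      _ ≤ ε / 2 := hMγ
  calc (∫⁻ u in S, ψ u * gaussW (u - y)) + ∫⁻ u in Sᶜ, ψ u * gaussW (u - y)
      ≤ ε / 2 + ε / 2 := add_le_add hb1 hb2
    _ = ε := ENNReal.add_halves ε
lemma weight_construct {h : ℝ → ℝ≥0∞} (hmeas : Measurable h) (B : ℝ≥0∞) (hB : B ≠ ⊤)
    (hhB : ∀ t, h t ≤ B)
    (hsmall : ∀ n : ℕ, ∃ τ : ℝ, 0 ≤ τ ∧ ∀ t, τ ≤ |t| → h t ≤ (2⁻¹ : ℝ≥0∞) ^ n) :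
    ∃ W : ℝ → ℝ≥0∞, Measurable W ∧ (∀ t, W t ≠ ⊤) ∧
      (∀ s t, s ≤ t → t ≤ 0 → W s ≤ W t) ∧ (∀ s t, 0 ≤ s → s ≤ t → W t ≤ W s) ∧
      (∫⁻ t in Set.Iic (0:ℝ), W t = ⊤) ∧ (∫⁻ t in Set.Ici (0:ℝ), W t = ⊤) ∧
      ∫⁻ t, W t * h t < ⊤ := by
  choose τ hτ0 hτ using hsmall
  set q : ℕ → ℝ≥0∞ := fun n => (2⁻¹ : ℝ≥0∞) ^ n with hq
  set D : ℕ → ℝ≥0∞ := fun n => ENNReal.ofReal (1 + τ n) with hD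
  have hD1 : ∀ n, 1 ≤ D n := fun n => by
    rw [hD]; exact ENNReal.one_le_ofReal.2 (by linarith [hτ0 n])
  have hD0 : ∀ n, D n ≠ 0 := fun n => by
    intro h0; simpa [h0] using hD1 n
  have hDtop : ∀ n, D n ≠ ⊤ := fun n => ENNReal.ofReal_ne_top
  set c : ℕ → ℝ≥0∞ := fun n => q n / D n with hc
  set A : ℕ → ℝ := fun n => (1 + τ n) * 2 ^ n with hA
  have hApos : ∀ n, 0 < A n := fun n => by
    have := hτ0 n; positivity
  set S : ℕ → Set ℝ := fun n => {s : ℝ | |s| < A n} with hS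
  have hSmeas : ∀ n, MeasurableSet (S n) := fun n =>
    measurableSet_lt (measurable_abs) measurable_const
  set W : ℝ → ℝ≥0∞ := fun t => ∑' n, (S n).indicator (fun _ => c n) t with hW
  have hcq : ∀ n, c n ≤ q n := fun n => by
    rw [hc]
    calc q n / D n ≤ q n / 1 := ENNReal.div_le_div le_rfl (hD1 n)
    _ = q n := by simp
  have hqsum : ∑' n, q n = 2 := by
    rw [hq]
    simp only [ENNReal.tsum_geometric, ENNReal.one_sub_inv_two, inv_inv]
  have hind_le : ∀ n t, (S n).indicator (fun _ => c n) t ≤ q n := fun n t => by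
    classical
    by_cases ht : t ∈ S n <;> simp [Set.indicator_of_mem, Set.indicator_of_notMem, ht, hcq n]
  have hWle : ∀ t, W t ≤ 2 := fun t => by
    rw [hW]
    calc ∑' n, (S n).indicator (fun _ => c n) t ≤ ∑' n, q n :=
      ENNReal.tsum_le_tsum (fun n => hind_le n t)
    _ = 2 := hqsum
  have hWtop : ∀ t, W t ≠ ⊤ := fun t => ((hWle t).trans_lt (by norm_num)).ne
  have hWmeas : Measurable W := by
    apply Measurable.ennreal_tsum
    intro n
    exact measurable_const.indicator (hSmeas n)
  -- monotonicity helper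
  have hmono : ∀ s t : ℝ, |t| ≤ |s| → W s ≤ W t := by
    intro s t hst
    apply ENNReal.tsum_le_tsum
    intro n
    by_cases hs : s ∈ S n
    · have htm : t ∈ S n := lt_of_le_of_lt hst hs
      simp [Set.indicator_of_mem, hs, htm]
    · simp [Set.indicator_of_notMem, hs]
  -- c n * (D n * x) = q n * x
  have hcD : ∀ n (x : ℝ≥0∞), c n * (D n * x) = q n * x := fun n x => by
    rw [hc, ← mul_assoc, ENNReal.div_mul_cancel (hD0 n) (hDtop n)]
  have hofA : ∀ n, ENNReal.ofReal (A n) = D n * 2 ^ n := fun n => by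
    rw [hA, hD]
    rw [ENNReal.ofReal_mul (by linarith [hτ0 n])]
    congr 1
    rw [ENNReal.ofReal_pow (by norm_num)]
    norm_num
  have hq2 : ∀ n, q n * 2 ^ n = 1 := fun n => by
    rw [hq, ← mul_pow, ENNReal.inv_mul_cancel (by norm_num) (by norm_num), one_pow]
  refine ⟨W, hWmeas, hWtop, ?_, ?_, ?_, ?_, ?_⟩
  · intro s t hst ht0
    exact hmono s t (by rw [abs_of_nonpos (hst.trans ht0), abs_of_nonpos ht0]; linarith)
  · intro s t hs0 hst
    exact hmono t s (by rw [abs_of_nonneg hs0, abs_of_nonneg (hs0.trans hst)]; linarith)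
  · -- Iic 0
    rw [hW, lintegral_tsum (fun n => (measurable_const.indicator (hSmeas n)).aemeasurable)]
    have : ∀ n, ∫⁻ t in Set.Iic (0:ℝ), (S n).indicator (fun _ => c n) t = c n * ENNReal.ofReal (A n) := by
      intro n
      rw [lintegral_indicator (hSmeas n), Measure.restrict_restrict (hSmeas n)]
      rw [setLIntegral_const]
      congr 1
      have : S n ∩ Set.Iic (0:ℝ) = Set.Ioc (-(A n)) 0 := by
        ext x
        simp only [hS, Set.mem_inter_iff, Set.mem_setOf_eq, Set.mem_Iic, Set.mem_Ioc, abs_lt]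
        constructor
        · rintro ⟨⟨h1, h2⟩, h3⟩; exact ⟨by linarith, h3⟩
        · rintro ⟨h1, h2⟩; exact ⟨⟨by linarith, by linarith [hApos n]⟩, h2⟩
      rw [this, Real.volume_Ioc]
      norm_num
    rw [tsum_congr this]
    have hone : ∀ n, c n * ENNReal.ofReal (A n) = 1 := fun n => by
      rw [hofA, hcD, hq2]
    rw [tsum_congr hone]
    exact ENNReal.tsum_const_eq_top_of_ne_zero one_ne_zero
  · -- Ici 0
    rw [hW, lintegral_tsum (fun n => (measurable_const.indicator (hSmeas n)).aemeasurable)]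
    have : ∀ n, ∫⁻ t in Set.Ici (0:ℝ), (S n).indicator (fun _ => c n) t = c n * ENNReal.ofReal (A n) := by
      intro n
      rw [lintegral_indicator (hSmeas n), Measure.restrict_restrict (hSmeas n)]
      rw [setLIntegral_const]
      congr 1
      have : S n ∩ Set.Ici (0:ℝ) = Set.Ico 0 (A n) := by
        ext x
        simp only [hS, Set.mem_inter_iff, Set.mem_setOf_eq, Set.mem_Ici, Set.mem_Ico, abs_lt]
        constructor
        · rintro ⟨⟨h1, h2⟩, h3⟩; exact ⟨h3, h2⟩
        · rintro ⟨h1, h2⟩; exact ⟨⟨by linarith [hApos n], h2⟩, h1⟩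
      rw [this, Real.volume_Ico]
      norm_num
    rw [tsum_congr this]
    have hone : ∀ n, c n * ENNReal.ofReal (A n) = 1 := fun n => by
      rw [hofA, hcD, hq2]
    rw [tsum_congr hone]
    exact ENNReal.tsum_const_eq_top_of_ne_zero one_ne_zero
  · -- final finiteness
    have step1 : ∫⁻ t, W t * h t = ∑' n, ∫⁻ t, (S n).indicator (fun _ => c n) t * h t := by
      rw [hW]
      have : ∀ t, (∑' n, (S n).indicator (fun _ => c n) t) * h t
          = ∑' n, (S n).indicator (fun _ => c n) t * h t := fun t =>
        (ENNReal.tsum_mul_right).symm ▸ rfl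
      rw [lintegral_congr this]
      exact lintegral_tsum fun n =>
        ((measurable_const.indicator (hSmeas n)).mul hmeas).aemeasurable
    rw [step1]
    have hterm : ∀ n, ∫⁻ t, (S n).indicator (fun _ => c n) t * h t ≤ q n * (2 * (B + 1)) := by
      intro n
      have e1 : ∀ t, (S n).indicator (fun _ => c n) t * h t
          = (S n).indicator (fun t => c n * h t) t := by
        intro t
        by_cases ht : t ∈ S n <;> simp [Set.indicator_of_mem, Set.indicator_of_notMem, ht]
      rw [lintegral_congr e1, lintegral_indicator (hSmeas n), lintegral_const_mul _ hmeas]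
      -- bound ∫⁻ in S n, h
      have hple : ∀ t : ℝ, h t ≤ ({s : ℝ | |s| ≤ τ n}).indicator (fun _ => B) t + q n := by
        intro t
        by_cases ht : |t| ≤ τ n
        · have : t ∈ {s : ℝ | |s| ≤ τ n} := ht
          rw [Set.indicator_of_mem this]
          exact le_add_right (hhB t)
        · have : t ∉ {s : ℝ | |s| ≤ τ n} := ht
          rw [Set.indicator_of_notMem this]
          simpa using hτ n t (le_of_not_ge ht)
      have hTm : MeasurableSet {s : ℝ | |s| ≤ τ n} := measurableSet_le measurable_abs measurable_const
      have hbound : ∫⁻ t in S n, h t ≤ B * ENNReal.ofReal (2 * τ n) + q n * ENNReal.ofReal (2 * A n) := by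
        calc ∫⁻ t in S n, h t
            ≤ ∫⁻ t in S n, (({s : ℝ | |s| ≤ τ n}).indicator (fun _ => B) t + q n) :=
              lintegral_mono hple
          _ = (∫⁻ t in S n, ({s : ℝ | |s| ≤ τ n}).indicator (fun _ => B) t) + q n * volume (S n) := by
              rw [lintegral_add_right _ measurable_const, setLIntegral_const]
          _ ≤ B * ENNReal.ofReal (2 * τ n) + q n * ENNReal.ofReal (2 * A n) := by
              gcongr
              · calc ∫⁻ t in S n, ({s : ℝ | |s| ≤ τ n}).indicator (fun _ => B) t
                    ≤ ∫⁻ t, ({s : ℝ | |s| ≤ τ n}).indicator (fun _ => B) t :=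
                      setLIntegral_le_lintegral _ _
                  _ = B * volume {s : ℝ | |s| ≤ τ n} := by
                      rw [lintegral_indicator hTm, setLIntegral_const, mul_comm]
                  _ = B * ENNReal.ofReal (2 * τ n) := by
                      congr 1
                      have : {s : ℝ | |s| ≤ τ n} = Set.Icc (-(τ n)) (τ n) := by
                        ext x; simp [abs_le]
                      rw [this, Real.volume_Icc]
                      congr 1; ring
              · have : S n ⊆ Set.Ioo (-(A n)) (A n) := by
                  intro x hx
                  simp only [hS, Set.mem_setOf_eq, abs_lt] at hx
                  exact hx
                calc volume (S n) ≤ volume (Set.Ioo (-(A n)) (A n)) := measure_mono this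
                  _ = ENNReal.ofReal (2 * A n) := by rw [Real.volume_Ioo]; congr 1; ring
      calc c n * ∫⁻ t in S n, h t
          ≤ c n * (B * ENNReal.ofReal (2 * τ n) + q n * ENNReal.ofReal (2 * A n)) := by gcongr
        _ ≤ c n * (B * (2 * D n) + q n * (2 * (D n * 2 ^ n))) := by
            gcongr
            · rw [hD]
              calc ENNReal.ofReal (2 * τ n) ≤ ENNReal.ofReal (2 * (1 + τ n)) := by
                    apply ENNReal.ofReal_le_ofReal; linarith [hτ0 n]
                _ = 2 * ENNReal.ofReal (1 + τ n) := by
                    rw [ENNReal.ofReal_mul (by norm_num)]; norm_num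
            · have : ENNReal.ofReal (2 * A n) = 2 * (D n * 2 ^ n) := by
                rw [ENNReal.ofReal_mul (by norm_num), hofA]; norm_num
              exact le_of_eq this
        _ = q n * (2 * (B + 1)) := by
            have key : B * (2 * D n) + q n * (2 * (D n * 2 ^ n)) = D n * (2 * (B + 1)) := by
              have h1 : q n * (2 * (D n * 2 ^ n)) = D n * (2 * (q n * 2 ^ n)) := by ring
              rw [h1, hq2 n]
              ring
            rw [key, hcD]
    calc ∑' n, ∫⁻ t, (S n).indicator (fun _ => c n) t * h t
        ≤ ∑' n, q n * (2 * (B + 1)) := ENNReal.tsum_le_tsum hterm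
      _ = 2 * (2 * (B + 1)) := by rw [ENNReal.tsum_mul_right, hqsum]
      _ < ⊤ := by
          apply ENNReal.mul_lt_top (by norm_num)
          apply ENNReal.mul_lt_top (by norm_num)
          exact ENNReal.add_lt_top.2 ⟨hB.lt_top, ENNReal.one_lt_top⟩

/-- The finiteness claim (e:finite.exp) in Example 4.3: if `|Y_t| → ∞` in
probability, there is a weight in the class 𝒲(ℝ) for which the Gaussian-averaged
weighted integral of `|φ(Y_t + z)|^α` is finite. -/
theorem exists_weight_finite_exp
    {Ω : Type*} [MeasurableSpace Ω] (P : Measure Ω) [IsProbabilityMeasure P]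
    (Y : ℝ → Ω → ℝ) (hY : Measurable fun p : ℝ × Ω => Y p.1 p.2)
    (hYinf : ∀ K : ℝ, Tendsto (fun t => P {ω | |Y t ω| ≤ K}) (cocompact ℝ) (nhds 0))
    (α : ℝ) (hα0 : 0 < α) (hα2 : α < 2)
    (φ : ℝ → ℝ) (hφ : Measurable φ)
    (hφα : ∫⁻ x : ℝ, ENNReal.ofReal (|φ x| ^ α) < ⊤) :
    ∃ w : ℝ → ℝ, (∀ t, 0 ≤ w t) ∧
      MonotoneOn w (Set.Iic 0) ∧ AntitoneOn w (Set.Ici 0) ∧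
      (∫⁻ t in Set.Iic (0 : ℝ), ENNReal.ofReal (w t) = ⊤) ∧
      (∫⁻ t in Set.Ici (0 : ℝ), ENNReal.ofReal (w t) = ⊤) ∧
      ∫⁻ ω, (∫⁻ z : ℝ,
          (∫⁻ t : ℝ, ENNReal.ofReal (w t) * ENNReal.ofReal (|φ (Y t ω + z)| ^ α)) *
            ENNReal.ofReal (Real.exp (-z ^ 2 / 2) / Real.sqrt (2 * Real.pi))) ∂P < ⊤ := by
  set ψ : ℝ → ℝ≥0∞ := fun x => ENNReal.ofReal (|φ x| ^ α) with hψdef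
  have hψm : Measurable ψ := by
    apply ENNReal.measurable_ofReal.comp
    exact (Real.continuous_rpow_const hα0.le).measurable.comp hφ.abs
  have hA : ∫⁻ x, ψ x ≠ ⊤ := hφα.ne
  set cst : ℝ≥0∞ := ENNReal.ofReal (1 / Real.sqrt (2 * Real.pi)) with hcst
  set B : ℝ≥0∞ := (∫⁻ x, ψ x) * cst with hBdef
  have hBtop : B ≠ ⊤ := ENNReal.mul_ne_top hA ENNReal.ofReal_ne_top
  set h₀ : ℝ → ℝ≥0∞ := fun y => ∫⁻ z, ψ (y + z) * gaussW z with hh₀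
  have hh₀m : Measurable h₀ := by
    apply Measurable.lintegral_prod_right' (f := fun p : ℝ × ℝ => ψ (p.1 + p.2) * gaussW p.2)
    exact (hψm.comp measurable_add).mul (gaussW_meas.comp measurable_snd)
  have hh₀B : ∀ y, h₀ y ≤ B := by
    intro y
    rw [hh₀, hBdef]
    calc ∫⁻ z, ψ (y + z) * gaussW z
        ≤ ∫⁻ z, ψ (y + z) * cst :=
          lintegral_mono fun z => mul_le_mul' le_rfl (gaussW_le_const z)
      _ = (∫⁻ z, ψ (y + z)) * cst :=
          lintegral_mul_const _ (hψm.comp (measurable_const.add measurable_id))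
      _ = (∫⁻ x, ψ x) * cst := by rw [lintegral_add_left_eq_self ψ y]
  set h : ℝ → ℝ≥0∞ := fun t => ∫⁻ ω, h₀ (Y t ω) ∂P with hh
  have hhm : Measurable h := by
    apply Measurable.lintegral_prod_right' (ν := P) (f := fun p : ℝ × Ω => h₀ (Y p.1 p.2))
    exact hh₀m.comp hY
  have hhB : ∀ t, h t ≤ B := fun t => by
    rw [hh]
    calc ∫⁻ ω, h₀ (Y t ω) ∂P ≤ ∫⁻ _, B ∂P := lintegral_mono fun ω => hh₀B _
      _ = B := by simp
  have hsmall : ∀ n : ℕ, ∃ τ : ℝ, 0 ≤ τ ∧ ∀ t, τ ≤ |t| → h t ≤ (2⁻¹ : ℝ≥0∞) ^ n := by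
    intro n
    set ε : ℝ≥0∞ := (2⁻¹ : ℝ≥0∞) ^ n with hεdef
    have hε0 : ε ≠ 0 := by
      rw [hεdef]; exact pow_ne_zero _ (by simp)
    have hε20 : ε / 2 ≠ 0 := (ENNReal.div_pos hε0 (by norm_num)).ne'
    obtain ⟨K, hK⟩ := h0_small hψm hA hε20
    have hev : ∀ᶠ t in cocompact ℝ, h t ≤ ε := by
      have hd : Tendsto (fun t => B * P {ω | |Y t ω| ≤ K}) (cocompact ℝ) (nhds 0) := by
        simpa using ENNReal.Tendsto.const_mul (hYinf K) (Or.inr hBtop)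
      rw [ENNReal.tendsto_nhds_zero] at hd
      filter_upwards [hd (ε / 2) (pos_iff_ne_zero.2 hε20)] with t ht
      have hSt : MeasurableSet {ω | |Y t ω| ≤ K} :=
        measurableSet_le (hY.comp measurable_prodMk_left).abs measurable_const
      have hple : ∀ ω, h₀ (Y t ω) ≤ ({ω | |Y t ω| ≤ K}).indicator (fun _ => B) ω + ε / 2 := by
        intro ω
        by_cases hω : ω ∈ {ω | |Y t ω| ≤ K}
        · rw [Set.indicator_of_mem hω]
          exact le_add_right (hh₀B _)
        · rw [Set.indicator_of_notMem hω]
          have hKle : K ≤ |Y t ω| := le_of_not_ge hω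
          simpa using hK _ hKle
      have : h t ≤ B * P {ω | |Y t ω| ≤ K} + ε / 2 := by
        rw [hh]
        calc ∫⁻ ω, h₀ (Y t ω) ∂P
            ≤ ∫⁻ ω, (({ω | |Y t ω| ≤ K}).indicator (fun _ => B) ω + ε / 2) ∂P :=
              lintegral_mono hple
          _ = B * P {ω | |Y t ω| ≤ K} + ε / 2 := by
              rw [lintegral_add_right _ measurable_const, lintegral_indicator_const hSt,
                lintegral_const]
              simp
      calc h t ≤ B * P {ω | |Y t ω| ≤ K} + ε / 2 := this
        _ ≤ ε / 2 + ε / 2 := by gcongr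
        _ = ε := ENNReal.add_halves ε
    rw [cocompact_eq_atBot_atTop, eventually_sup, eventually_atBot, eventually_atTop] at hev
    obtain ⟨⟨a, ha⟩, b, hb⟩ := hev
    refine ⟨max |a| |b|, le_trans (abs_nonneg a) (le_max_left _ _), fun t ht => ?_⟩
    rcases le_or_gt 0 t with htpos | htneg
    · apply hb
      have habs : |t| = t := abs_of_nonneg htpos
      calc b ≤ |b| := le_abs_self b
        _ ≤ max |a| |b| := le_max_right _ _
        _ ≤ |t| := ht
        _ = t := habs
    · apply ha
      have habs : |t| = -t := abs_of_neg htneg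
      have h1 : max |a| |b| ≤ -t := habs ▸ ht
      linarith [neg_abs_le a, le_max_left |a| |b|]
  obtain ⟨W, hWmeas, hWtop, hWmono, hWanti, hWIic, hWIci, hWfin⟩ :=
    weight_construct hhm B hBtop hhB hsmall
  have hofW : ∀ t, ENNReal.ofReal ((W t).toReal) = W t := fun t =>
    ENNReal.ofReal_toReal (hWtop t)
  refine ⟨fun t => (W t).toReal, fun t => ENNReal.toReal_nonneg, ?_, ?_, ?_, ?_, ?_⟩
  · intro s hs t ht hst
    exact (ENNReal.toReal_le_toReal (hWtop s) (hWtop t)).2 (hWmono s t hst ht)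
  · intro s hs t ht hst
    exact (ENNReal.toReal_le_toReal (hWtop t) (hWtop s)).2 (hWanti s t hs hst)
  · rw [lintegral_congr fun t => hofW t]
    exact hWIic
  · rw [lintegral_congr fun t => hofW t]
    exact hWIci
  · simp only [hofW]
    have m1 : ∀ ω, Measurable fun t => Y t ω := fun ω =>
      hY.comp (measurable_id.prodMk measurable_const)
    have goal_eq : (∫⁻ ω, (∫⁻ z, (∫⁻ t, W t * ψ (Y t ω + z)) * gaussW z) ∂P)
        = ∫⁻ t, W t * h t := by
      calc ∫⁻ ω, (∫⁻ z, (∫⁻ t, W t * ψ (Y t ω + z)) * gaussW z) ∂P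
          = ∫⁻ ω, (∫⁻ z, ∫⁻ t, W t * ψ (Y t ω + z) * gaussW z) ∂P := by
            apply lintegral_congr; intro ω; apply lintegral_congr; intro z
            exact (lintegral_mul_const _ (hWmeas.mul (hψm.comp ((m1 ω).add_const z)))).symm
        _ = ∫⁻ ω, (∫⁻ t, ∫⁻ z, W t * ψ (Y t ω + z) * gaussW z) ∂P := by
            apply lintegral_congr; intro ω
            apply lintegral_lintegral_swap
            apply Measurable.aemeasurable
            exact ((hWmeas.comp measurable_snd).mul
              (hψm.comp ((hY.comp (measurable_snd.prodMk measurable_const)).add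
                measurable_fst))).mul (gaussW_meas.comp measurable_fst)
        _ = ∫⁻ ω, (∫⁻ t, W t * h₀ (Y t ω)) ∂P := by
            apply lintegral_congr; intro ω; apply lintegral_congr; intro t
            simp only [hh₀]
            have hm' : Measurable fun z : ℝ => ψ (Y t ω + z) * gaussW z :=
              (hψm.comp (measurable_const.add measurable_id)).mul gaussW_meas
            rw [← lintegral_const_mul _ hm']
            exact lintegral_congr fun z => mul_assoc _ _ _
        _ = ∫⁻ t, ∫⁻ ω, W t * h₀ (Y t ω) ∂P := by
            apply lintegral_lintegral_swap
            exact ((hWmeas.comp measurable_snd).mul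
              (hh₀m.comp (hY.comp (measurable_snd.prodMk measurable_fst)))).aemeasurable
        _ = ∫⁻ t, W t * h t := by
            apply lintegral_congr; intro t
            have hm'' : Measurable fun ω : Ω => h₀ (Y t ω) :=
              hh₀m.comp (hY.comp measurable_prodMk_left)
            rw [hh, lintegral_const_mul _ hm'']
    calc ∫⁻ ω, (∫⁻ z, (∫⁻ t, W t * ψ (Y t ω + z)) * gaussW z) ∂P
        = ∫⁻ t, W t * h t := goal_eq
      _ < ⊤ := hWfin
end

section
/- Let (Ω, 𝓕, P) be a probability space, let Y: ℝ × Ω → ℝ be jointly measurable with |Y(t,ω)| → ∞ as |t| → ∞ for P-almost every ω, and let 0 < α < 2. Then there exists a bounded, strictly positive function φ̃ ∈ L^α(Leb_ℝ), nondecreasing on (−∞,0] and nonincreasing on [0,∞), such that ∫_ℝ φ̃(Y(t,ω)/2) dt < ∞ for P-almost every ω. -/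
open MeasureTheory Filter Set
open scoped ENNReal Topology

private lemma lintegral_floor_comp (g : ℝ → ℝ) (hg : Measurable g) (c : ℕ → ℝ≥0∞) :
    ∫⁻ t : ℝ, c ⌊g t⌋₊ = ∑' n : ℕ, c n * volume {t : ℝ | ⌊g t⌋₊ = n} := by
  have hfloor : Measurable fun t => ⌊g t⌋₊ := Nat.measurable_floor.comp hg
  have hmap := lintegral_map (μ := (volume : Measure ℝ)) (f := c)
    (g := fun t => ⌊g t⌋₊) measurable_from_nat hfloor
  rw [← hmap, lintegral_countable']
  congr 1
  ext n
  rw [Measure.map_apply hfloor (measurableSet_singleton n)]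
  rfl

/-- The claim in Example 4.3 under the almost-sure escape condition
(e:infty.a.s.): there is a bounded strictly positive `φ̃ ∈ L^α(Leb)`, monotone on
each half-line, with `∫ φ̃(Y(t)/2) dt < ∞` almost surely. -/
theorem exists_dissipativity_witness
    {Ω : Type*} [MeasurableSpace Ω] (P : Measure Ω) [IsProbabilityMeasure P]
    (Y : ℝ → Ω → ℝ) (hY : Measurable fun p : ℝ × Ω => Y p.1 p.2)
    (hYinf : ∀ᵐ ω ∂P, Tendsto (fun t => |Y t ω|) (cocompact ℝ) atTop)
    (α : ℝ) (hα0 : 0 < α) (hα2 : α < 2) :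
    ∃ φ : ℝ → ℝ, (∃ C : ℝ, ∀ x, φ x ≤ C) ∧ (∀ x, 0 < φ x) ∧
      MonotoneOn φ (Set.Iic 0) ∧ AntitoneOn φ (Set.Ici 0) ∧
      (∫⁻ x : ℝ, ENNReal.ofReal (φ x ^ α) < ⊤) ∧
      ∀ᵐ ω ∂P, ∫⁻ t : ℝ, ENNReal.ofReal (φ (Y t ω / 2)) < ⊤ := by
  classical
  have hYsec : ∀ ω, Measurable fun t => Y t ω := fun ω =>
    hY.comp (measurable_id.prodMk measurable_const)
  -- the sublevel-set measure
  set L : ℕ → Ω → ℝ≥0∞ := fun n ω => volume {t : ℝ | |Y t ω| ≤ (n : ℝ)} with hLdef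
  have hLmeas : ∀ n, Measurable (L n) := by
    intro n
    have hs : MeasurableSet {p : ℝ × Ω | |Y p.1 p.2| ≤ (n : ℝ)} :=
      measurableSet_le hY.abs measurable_const
    exact measurable_measure_prodMk_right (μ := (volume : Measure ℝ)) hs
  -- a.e. finiteness of all sublevel measures
  have hfin : ∀ᵐ ω ∂P, ∀ n : ℕ, L n ω < ⊤ := by
    filter_upwards [hYinf] with ω hω n
    have h1 : ∀ᶠ t in cocompact ℝ, (n : ℝ) < |Y t ω| := hω.eventually (eventually_gt_atTop _)
    rcases mem_cocompact.1 h1 with ⟨K, hK, hKsub⟩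
    have hsub : {t : ℝ | |Y t ω| ≤ (n : ℝ)} ⊆ K := by
      intro t ht
      by_contra h
      have h2 := hKsub h
      simp only [mem_setOf_eq] at h2
      exact absurd h2 (not_lt.2 ht)
    exact lt_of_le_of_lt (measure_mono hsub) hK.measure_lt_top
  -- choose thresholds with small exceptional probability
  have hNex : ∀ n : ℕ, ∃ k : ℕ, P {ω | (k : ℝ≥0∞) < L n ω} ≤ (2⁻¹ : ℝ≥0∞) ^ n := by
    intro n
    set s : ℕ → Set Ω := fun k => {ω | (k : ℝ≥0∞) < L n ω} with hsdef
    have hmeas : ∀ k, MeasurableSet (s k) := fun k => (hLmeas n) measurableSet_Ioi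
    have hanti : Antitone s := fun k k' hkk' ω hω =>
      lt_of_le_of_lt (Nat.cast_le.2 hkk' : (k : ℝ≥0∞) ≤ k') hω
    have hInter : P (⋂ k, s k) = 0 := by
      have hfin' := hfin
      rw [ae_iff] at hfin'
      refine measure_mono_null (fun ω hω => ?_) hfin'
      simp only [mem_iInter] at hω
      intro h
      have hlt := h n
      obtain ⟨k, hk⟩ := ENNReal.exists_nat_gt hlt.ne
      exact absurd (hk.trans (hω k)) (lt_irrefl _)
    have htend : Tendsto (P ∘ s) atTop (𝓝 0) := by
      have := tendsto_measure_iInter_atTop (μ := P)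
        (fun k => (hmeas k).nullMeasurableSet) hanti ⟨0, measure_ne_top P _⟩
      rwa [hInter] at this
    have hpos : (0 : ℝ≥0∞) < (2⁻¹ : ℝ≥0∞) ^ n :=
      pos_iff_ne_zero.2 (pow_ne_zero n (by norm_num))
    obtain ⟨k, hk⟩ := (htend.eventually_lt_const hpos).exists
    exact ⟨k, hk.le⟩
  choose N hN using hNex
  -- Borel–Cantelli
  have hBC : ∀ᵐ ω ∂P, ∀ᶠ n in atTop, L n ω ≤ (N n : ℝ≥0∞) := by
    have hsum : (∑' n, P {ω | (N n : ℝ≥0∞) < L n ω}) ≠ ⊤ := by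
      refine ne_top_of_le_ne_top ?_ (ENNReal.tsum_le_tsum hN)
      rw [ENNReal.tsum_geometric]
      simp [ENNReal.sub_half]
    filter_upwards [MeasureTheory.ae_eventually_notMem
      (μ := P) (s := fun n => {ω | (N n : ℝ≥0∞) < L n ω}) hsum] with ω hω
    exact hω.mono fun n hn => not_lt.1 hn
  -- the deterministic decay sequence
  set M : ℕ → ℕ := fun n => (Finset.range (2 * n + 3)).sup N with hMdef
  have hMmono : Monotone M := fun a b hab =>
    Finset.sup_mono (Finset.range_subset_range.2 (by omega))
  have hNleM : ∀ n, N (2 * n + 2) ≤ M n := fun n =>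
    Finset.le_sup (Finset.mem_range.2 (by omega))
  set b : ℕ → ℝ := fun n => (2⁻¹ : ℝ) ^ n / ((M n : ℝ) + 1) with hbdef
  have hbpos : ∀ n, 0 < b n := fun n => div_pos (by positivity) (by positivity)
  have hble : ∀ n, b n ≤ (2⁻¹ : ℝ) ^ n := fun n =>
    div_le_self (by positivity) (le_add_of_nonneg_left (Nat.cast_nonneg _))
  have hbanti : Antitone b := by
    intro m n hmn
    have h1 : (2⁻¹ : ℝ) ^ n ≤ (2⁻¹ : ℝ) ^ m :=
      pow_le_pow_of_le_one (by norm_num) (by norm_num) hmn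
    have h2 : (M m : ℝ) + 1 ≤ (M n : ℝ) + 1 := by
      have := hMmono hmn
      have : (M m : ℝ) ≤ (M n : ℝ) := Nat.cast_le.2 this
      linarith
    simp only [hbdef]
    gcongr
  refine ⟨fun x => b ⌊|x|⌋₊, ⟨1, fun x => ?_⟩, fun x => hbpos _, ?_, ?_, ?_, ?_⟩
  · exact (hble _).trans (pow_le_one₀ (by norm_num) (by norm_num))
  · -- MonotoneOn on Iic 0
    intro x hx y hy hxy
    have habs : |y| ≤ |x| := abs_le_abs_of_nonpos hy hxy
    exact hbanti (Nat.floor_le_floor habs)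
  · -- AntitoneOn on Ici 0
    intro x hx y hy hxy
    have habs : |x| ≤ |y| := by
      rw [abs_of_nonneg hx, abs_of_nonneg hy]; exact hxy
    exact hbanti (Nat.floor_le_floor habs)
  · -- integrability of φ^α
    have key := lintegral_floor_comp (fun x => |x|) measurable_abs
      (fun n => ENNReal.ofReal (b n ^ α))
    have hvol : ∀ n : ℕ, volume {x : ℝ | ⌊|x|⌋₊ = n} ≤ ENNReal.ofReal (2 * ((n : ℝ) + 1)) := by
      intro n
      have hsub : {x : ℝ | ⌊|x|⌋₊ = n} ⊆ Ioo (-((n : ℝ) + 1)) ((n : ℝ) + 1) := by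
        intro x hx
        have h1 : |x| < (n : ℝ) + 1 := by
          have h2 := Nat.lt_floor_add_one |x|
          rw [mem_setOf_eq] at hx
          rw [hx] at h2
          exact h2
        rcases abs_lt.1 h1 with ⟨ha, hb'⟩
        exact ⟨by linarith, hb'⟩
      calc volume {x : ℝ | ⌊|x|⌋₊ = n} ≤ volume (Ioo (-((n : ℝ) + 1)) ((n : ℝ) + 1)) :=
            measure_mono hsub
        _ = ENNReal.ofReal (2 * ((n : ℝ) + 1)) := by
            rw [Real.volume_Ioo]
            congr 1
            ring
    have hbpow : ∀ n : ℕ, b n ^ α ≤ ((2⁻¹ : ℝ) ^ α) ^ n := by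
      intro n
      calc b n ^ α ≤ ((2⁻¹ : ℝ) ^ n) ^ α :=
            Real.rpow_le_rpow (hbpos n).le (hble n) hα0.le
        _ = ((2⁻¹ : ℝ) ^ α) ^ n := by
            rw [← Real.rpow_natCast (2⁻¹ : ℝ) n, ← Real.rpow_natCast ((2⁻¹ : ℝ) ^ α) n,
              ← Real.rpow_mul (by norm_num), ← Real.rpow_mul (by norm_num), mul_comm]
    set q : ℝ := (2⁻¹ : ℝ) ^ α with hqdef
    have hq0 : 0 ≤ q := Real.rpow_nonneg (by norm_num) α
    have hq1 : q < 1 := Real.rpow_lt_one (by norm_num) (by norm_num) hα0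
    have hsummable : Summable (fun n : ℕ => q ^ n * (2 * ((n : ℝ) + 1))) := by
      have hnorm : ‖q‖ < 1 := by rwa [Real.norm_eq_abs, abs_of_nonneg hq0]
      have s1 : Summable (fun n : ℕ => (n : ℝ) ^ 1 * q ^ n) :=
        summable_pow_mul_geometric_of_norm_lt_one 1 hnorm
      have s2 : Summable (fun n : ℕ => q ^ n) := summable_geometric_of_lt_one hq0 hq1
      have s3 : Summable (fun n : ℕ => 2 * ((n : ℝ) ^ 1 * q ^ n + q ^ n)) :=
        (s1.add s2).mul_left 2
      exact s3.congr fun n => by ring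
    calc ∫⁻ x : ℝ, ENNReal.ofReal (b ⌊|x|⌋₊ ^ α)
        = ∑' n : ℕ, ENNReal.ofReal (b n ^ α) * volume {x : ℝ | ⌊|x|⌋₊ = n} := key
      _ ≤ ∑' n : ℕ, ENNReal.ofReal (q ^ n * (2 * ((n : ℝ) + 1))) := by
          refine ENNReal.tsum_le_tsum fun n => ?_
          calc ENNReal.ofReal (b n ^ α) * volume {x : ℝ | ⌊|x|⌋₊ = n}
              ≤ ENNReal.ofReal (q ^ n) * ENNReal.ofReal (2 * ((n : ℝ) + 1)) :=
                mul_le_mul' (ENNReal.ofReal_le_ofReal (hbpow n)) (hvol n)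
            _ = ENNReal.ofReal (q ^ n * (2 * ((n : ℝ) + 1))) :=
                (ENNReal.ofReal_mul (by positivity)).symm
      _ = ENNReal.ofReal (∑' n : ℕ, q ^ n * (2 * ((n : ℝ) + 1))) :=
          (ENNReal.ofReal_tsum_of_nonneg (fun n => by positivity) hsummable).symm
      _ < ⊤ := ENNReal.ofReal_lt_top
  · -- the almost-sure finiteness
    filter_upwards [hBC, hfin] with ω hω hωfin
    have hgmeas : Measurable fun t => |Y t ω / 2| := ((hYsec ω).div_const 2).abs
    have key := lintegral_floor_comp (fun t => |Y t ω / 2|) hgmeas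
      (fun n => ENNReal.ofReal (b n))
    obtain ⟨M0, hM0⟩ := eventually_atTop.1 hω
    set term : ℕ → ℝ≥0∞ := fun n => ENNReal.ofReal (b n) * L (2 * n + 2) ω with htermdef
    have hterm_le : ∀ n : ℕ,
        ENNReal.ofReal (b n) * volume {t : ℝ | ⌊|Y t ω / 2|⌋₊ = n} ≤ term n := by
      intro n
      refine mul_le_mul_right (measure_mono ?_) _
      intro t ht
      rw [mem_setOf_eq] at ht ⊢
      have h1 : |Y t ω / 2| < (n : ℝ) + 1 := by
        have h2 := Nat.lt_floor_add_one |Y t ω / 2|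
        rw [ht] at h2
        exact h2
      have h3 : |Y t ω| < 2 * ((n : ℝ) + 1) := by
        rw [abs_div] at h1
        have : |(2 : ℝ)| = 2 := by norm_num
        rw [this, div_lt_iff₀ (by norm_num)] at h1
        linarith
      push_cast
      linarith
    have htail : ∀ n : ℕ, M0 ≤ n → term n ≤ (2⁻¹ : ℝ≥0∞) ^ n := by
      intro n hn
      have hLn : L (2 * n + 2) ω ≤ (N (2 * n + 2) : ℝ≥0∞) := hM0 _ (by omega)
      have hNM : (N (2 * n + 2) : ℝ) ≤ (M n : ℝ) + 1 := by
        have := hNleM n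
        have : (N (2 * n + 2) : ℝ) ≤ (M n : ℝ) := Nat.cast_le.2 this
        linarith
      calc term n ≤ ENNReal.ofReal (b n) * (N (2 * n + 2) : ℝ≥0∞) :=
            mul_le_mul_right hLn _
        _ = ENNReal.ofReal (b n * (N (2 * n + 2) : ℝ)) := by
            rw [ENNReal.ofReal_mul (hbpos n).le, ENNReal.ofReal_natCast]
        _ ≤ ENNReal.ofReal ((2⁻¹ : ℝ) ^ n) := by
            apply ENNReal.ofReal_le_ofReal
            rw [hbdef]
            rw [div_mul_eq_mul_div, div_le_iff₀ (by positivity)]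
            have hp : (0 : ℝ) ≤ (2⁻¹ : ℝ) ^ n := by positivity
            nlinarith
        _ = (2⁻¹ : ℝ≥0∞) ^ n := by
            rw [ENNReal.ofReal_pow (by norm_num)]
            congr 1
            rw [ENNReal.ofReal_inv_of_pos (by norm_num), ENNReal.ofReal_ofNat]
    calc ∫⁻ t : ℝ, ENNReal.ofReal (b ⌊|Y t ω / 2|⌋₊)
        = ∑' n : ℕ, ENNReal.ofReal (b n) * volume {t : ℝ | ⌊|Y t ω / 2|⌋₊ = n} := key
      _ ≤ ∑' n : ℕ, term n := ENNReal.tsum_le_tsum hterm_le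
      _ < ⊤ := by
          rw [← Summable.sum_add_tsum_nat_add' (f := term) (k := M0)
            (ENNReal.summable (f := fun i => term (i + M0)))]
          refine ENNReal.add_lt_top.2 ⟨?_, ?_⟩
          · refine ENNReal.sum_lt_top.2 fun i _ => ?_
            exact ENNReal.mul_lt_top ENNReal.ofReal_lt_top (hωfin (2 * i + 2))
          · calc ∑' i : ℕ, term (i + M0) ≤ ∑' i : ℕ, (2⁻¹ : ℝ≥0∞) ^ (i + M0) :=
                ENNReal.tsum_le_tsum fun i => htail (i + M0) (by omega)
              _ ≤ ∑' i : ℕ, (2⁻¹ : ℝ≥0∞) ^ i := by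
                  refine ENNReal.tsum_le_tsum fun i => ?_
                  exact pow_le_pow_of_le_one zero_le (by norm_num) (by omega)
              _ = (1 - 2⁻¹)⁻¹ := ENNReal.tsum_geometric _
              _ < ⊤ := by
                  rw [ENNReal.one_sub_inv_two]
                  simp
end
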